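/- arXiv:2005.00467 — 3 statements merged into one kernel-verified Lean document; each statement's English description precedes it below -/
import Mathlib

section
/- If H and K are finite groups each admitting an abelian partition, then H × K admits an abelian partition, and ϑ_a(H × K) ≤ ϑ_a(H) · ϑ_a(K). -/
/-!
If `A₁, …, Aₙ` and `B₁, …, Bₘ` are abelian partitions of `H` and `K`, the boxes `Aᵢ × Bⱼ`
form an abelian partition of `H × K` with `n * m` parts: commutation in `H × K` is
componentwise, two boxes are disjoint as soon as one pair of sides is, and
`|Aᵢ × Bⱼ| = |Aᵢ| |Bⱼ| ≥ 4`.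
-/

/-- An abelian partition of a group `G`: a family of `n` pairwise disjoint sets covering `G`,
each of size at least 2 and consisting of pairwise commuting elements. -/
def IsAbelianPartition {G : Type*} [Group G] {n : ℕ} (A : Fin n → Set G) : Prop :=
  (∀ i, 2 ≤ (A i).ncard) ∧ (⋃ i, A i) = Set.univ ∧
    Pairwise (Function.onFun Disjoint A) ∧
    ∀ i, ∀ x ∈ A i, ∀ y ∈ A i, x * y = y * x

/-- The minimal number of parts in an abelian partition of `G` (0 if none exists). -/
noncomputable def apDegree (G : Type*) [Group G] : ℕ :=
  sInf {n | ∃ A : Fin n → Set G, IsAbelianPartition A}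

/-- The maximal size of a noncommuting subset of `G`. -/
noncomputable def maxNoncommuting (G : Type*) [Group G] : ℕ :=
  sSup {k | ∃ S : Set G, S.ncard = k ∧ ∀ x ∈ S, ∀ y ∈ S, x ≠ y → x * y ≠ y * x}

section apDegree

variable {G : Type*} [Group G]

theorem apDegree_le_of_isAbelianPartition {n : ℕ} {A : Fin n → Set G}
    (hA : IsAbelianPartition A) : apDegree G ≤ n :=
  Nat.sInf_le ⟨A, hA⟩

theorem exists_isAbelianPartition_apDegree
    (h : ∃ (n : ℕ) (A : Fin n → Set G), IsAbelianPartition A) :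
    ∃ A : Fin (apDegree G) → Set G, IsAbelianPartition A :=
  Nat.sInf_mem h

end apDegree

namespace IsAbelianPartition

variable {H K : Type*} [Group H] [Group K] {n m : ℕ} {A : Fin n → Set H} {B : Fin m → Set K}

def prodFamily (A : Fin n → Set H) (B : Fin m → Set K) (k : Fin (n * m)) : Set (H × K) :=
  A (finProdFinEquiv.symm k).1 ×ˢ B (finProdFinEquiv.symm k).2

theorem prod (hA : IsAbelianPartition A) (hB : IsAbelianPartition B) :
    IsAbelianPartition (prodFamily A B) := by
  obtain ⟨hA_card, hA_cover, hA_disj, hA_comm⟩ := hA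
  obtain ⟨hB_card, hB_cover, hB_disj, hB_comm⟩ := hB
  refine ⟨fun k => ?_, ?_, fun k k' hkk' => ?_, ?_⟩
  · rw [prodFamily, Set.ncard_prod]
    nlinarith [hA_card (finProdFinEquiv.symm k).1, hB_card (finProdFinEquiv.symm k).2]
  · unfold prodFamily
    rw [finProdFinEquiv.symm.surjective.iUnion_comp (fun p => A p.1 ×ˢ B p.2), Set.iUnion_prod,
      hA_cover, hB_cover, Set.univ_prod_univ]
  · have hne : finProdFinEquiv.symm k ≠ finProdFinEquiv.symm k' :=
      finProdFinEquiv.symm.injective.ne hkk'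
    rw [Function.onFun, prodFamily, prodFamily, Set.disjoint_prod]
    by_cases hfst : (finProdFinEquiv.symm k).1 = (finProdFinEquiv.symm k').1
    · exact Or.inr (hB_disj fun hsnd => hne (Prod.ext hfst hsnd))
    · exact Or.inl (hA_disj hfst)
  · rintro k ⟨x₁, x₂⟩ ⟨hx₁, hx₂⟩ ⟨y₁, y₂⟩ ⟨hy₁, hy₂⟩
    exact Prod.ext (hA_comm _ _ hx₁ _ hy₁) (hB_comm _ _ hx₂ _ hy₂)

end IsAbelianPartition

theorem apDegree_prod_le_general
    {H K : Type*} [Group H] [Group K]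
    (hH : ∃ (n : ℕ) (A : Fin n → Set H), IsAbelianPartition A)
    (hK : ∃ (n : ℕ) (B : Fin n → Set K), IsAbelianPartition B) :
    (∃ (n : ℕ) (C : Fin n → Set (H × K)), IsAbelianPartition C) ∧
      apDegree (H × K) ≤ apDegree H * apDegree K := by
  obtain ⟨A, hA⟩ := exists_isAbelianPartition_apDegree hH
  obtain ⟨B, hB⟩ := exists_isAbelianPartition_apDegree hK
  exact ⟨⟨_, _, hA.prod hB⟩, apDegree_le_of_isAbelianPartition (hA.prod hB)⟩

theorem apDegree_prod_le
    {H K : Type*} [Group H] [Group K] [Finite H] [Finite K]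
    (hH : ∃ (n : ℕ) (A : Fin n → Set H), IsAbelianPartition A)
    (hK : ∃ (n : ℕ) (B : Fin n → Set K), IsAbelianPartition B) :
    (∃ (n : ℕ) (C : Fin n → Set (H × K)), IsAbelianPartition C) ∧
      apDegree (H × K) ≤ apDegree H * apDegree K :=
  apDegree_prod_le_general hH hK
end

section
/- A finite group G is an AC-group if and only if for all noncentral elements x and y of G, either C_G(x) = C_G(y) or C_G(x) ∩ C_G(y) = Z(G). -/
def IsACGroup (G : Type*) [Group G] : Prop :=
  ∀ x : G, x ∉ Subgroup.center G →
    ∀ a ∈ Subgroup.centralizer {x}, ∀ b ∈ Subgroup.centralizer {x}, a * b = b * a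

namespace Subgroup

variable {G : Type*} [Group G]

theorem mem_centralizer_singleton_comm {x y : G} :
    y ∈ centralizer {x} ↔ x ∈ centralizer {y} := by
  simp only [mem_centralizer_singleton_iff, eq_comm]

theorem centralizer_singleton_le_of_mem {x y : G}
    (hx : ∀ a ∈ centralizer {x}, ∀ b ∈ centralizer {x}, a * b = b * a)
    (hy : y ∈ centralizer {x}) : centralizer {x} ≤ centralizer {y} :=
  fun a ha => mem_centralizer_singleton_iff.mpr (hx a ha y hy)

theorem exists_notMem_center_of_inf_centralizer_ne_center {x y : G}
    (h : centralizer ({x} : Set G) ⊓ centralizer {y} ≠ center G) :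
    ∃ z ∈ centralizer ({x} : Set G) ⊓ centralizer {y}, z ∉ center G := by
  by_contra! hz
  exact h (le_antisymm hz (le_inf (center_le_centralizer _) (center_le_centralizer _)))

end Subgroup

open Subgroup

namespace IsACGroup

variable {G : Type*} [Group G]

theorem centralizer_eq_of_mem_centralizer (hG : IsACGroup G) {x y : G}
    (hx : x ∉ center G) (hy : y ∉ center G) (hxy : y ∈ centralizer {x}) :
    centralizer ({x} : Set G) = centralizer {y} :=
  le_antisymm (centralizer_singleton_le_of_mem (hG x hx) hxy)
    (centralizer_singleton_le_of_mem (hG y hy) (mem_centralizer_singleton_comm.mp hxy))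

theorem centralizer_eq_or_inf_eq_center (hG : IsACGroup G) {x y : G}
    (hx : x ∉ center G) (hy : y ∉ center G) :
    centralizer {x} = centralizer {y} ∨
      centralizer ({x} : Set G) ⊓ centralizer {y} = center G := by
  refine or_iff_not_imp_right.mpr fun hne => ?_
  obtain ⟨z, ⟨hzx, hzy⟩, hz⟩ := exists_notMem_center_of_inf_centralizer_ne_center hne
  rw [hG.centralizer_eq_of_mem_centralizer hx hz hzx,
    hG.centralizer_eq_of_mem_centralizer hy hz hzy]

end IsACGroup

/- If `a, b` are noncentral and commute with a noncentral `x`, then `C(a) ∩ C(b) ≠ Z(G)`, so the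
hypothesis forces `C(a) = C(b)`, which contains `a`. -/
theorem isACGroup_of_centralizer_eq_or_inf_eq_center {G : Type*} [Group G]
    (h : ∀ x y : G, x ∉ center G → y ∉ center G →
      centralizer {x} = centralizer {y} ∨
        centralizer ({x} : Set G) ⊓ centralizer {y} = center G) :
    IsACGroup G := by
  intro x hx a ha b hb
  by_cases hac : a ∈ center G
  · exact (mem_center_iff.mp hac b).symm
  by_cases hbc : b ∈ center G
  · exact mem_center_iff.mp hbc a
  rcases h a b hac hbc with heq | hinf
  · have hab : b ∈ centralizer {a} := heq ▸ mem_centralizer_singleton_iff.mpr rfl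
    exact (mem_centralizer_singleton_iff.mp hab).symm
  · have hx' : x ∈ centralizer ({a} : Set G) ⊓ centralizer {b} :=
      ⟨mem_centralizer_singleton_comm.mp ha, mem_centralizer_singleton_comm.mp hb⟩
    exact absurd (hinf ▸ hx') hx

theorem AC_iff_centralizers_eq_or_meet_center_general
    {G : Type*} [Group G] :
    (∀ x : G, x ∉ Subgroup.center G →
        ∀ a ∈ Subgroup.centralizer {x}, ∀ b ∈ Subgroup.centralizer {x}, a * b = b * a) ↔
      (∀ x y : G, x ∉ Subgroup.center G → y ∉ Subgroup.center G →
        Subgroup.centralizer {x} = Subgroup.centralizer {y} ∨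
          Subgroup.centralizer ({x} : Set G) ⊓ Subgroup.centralizer {y} =
            Subgroup.center G) :=
  ⟨fun hG _ _ => IsACGroup.centralizer_eq_or_inf_eq_center hG,
    isACGroup_of_centralizer_eq_or_inf_eq_center⟩

theorem AC_iff_centralizers_eq_or_meet_center
    {G : Type*} [Group G] [Finite G] :
    (∀ x : G, x ∉ Subgroup.center G →
        ∀ a ∈ Subgroup.centralizer {x}, ∀ b ∈ Subgroup.centralizer {x}, a * b = b * a) ↔
      (∀ x y : G, x ∉ Subgroup.center G → y ∉ Subgroup.center G →
        Subgroup.centralizer {x} = Subgroup.centralizer {y} ∨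
          Subgroup.centralizer ({x} : Set G) ⊓ Subgroup.centralizer {y} =
            Subgroup.center G) :=
  AC_iff_centralizers_eq_or_meet_center_general
end

section
/- The alternating group A_5 admits an abelian partition and ϑ_a(A_5) = 21. -/
section AbelianPartition

variable {G : Type*} [Group G]

theorem IsAbelianPartition.exists_ne_one_mem {n : ℕ} {A : Fin n → Set G}
    (hA : IsAbelianPartition A) (i : Fin n) : ∃ x ∈ A i, x ≠ 1 :=
  Set.exists_ne_of_one_lt_ncard (hA.1 i) 1

theorem IsAbelianPartition.exists_mem {n : ℕ} {A : Fin n → Set G}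
    (hA : IsAbelianPartition A) (x : G) : ∃ i, x ∈ A i :=
  Set.mem_iUnion.1 (hA.2.1 ▸ Set.mem_univ x)

theorem IsAbelianPartition.le_of_commute_imp_eq {n k : ℕ} {A : Fin n → Set G}
    (hA : IsAbelianPartition A) (f : G → Fin k)
    (hf : ∀ x y : G, x ≠ 1 → y ≠ 1 → Commute x y → f x = f y)
    (hsurj : ∀ j, ∃ x ≠ 1, f x = j) : k ≤ n := by
  choose a ha ha1 using hA.exists_ne_one_mem
  suffices (fun i => f (a i)).Surjective by simpa using Fintype.card_le_of_surjective _ this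
  intro j
  obtain ⟨x, hx1, rfl⟩ := hsurj j
  obtain ⟨i, hi⟩ := hA.exists_mem x
  exact ⟨i, hf _ _ (ha1 i) hx1 (hA.2.2.2 i _ (ha i) x hi)⟩

theorem isAbelianPartition_fibers {k : ℕ} (f : G → Fin k)
    (hf : ∀ x y : G, x ≠ 1 → y ≠ 1 → f x = f y → Commute x y)
    (hfib : ∀ j, 2 ≤ (f ⁻¹' {j}).ncard) : IsAbelianPartition fun j => f ⁻¹' {j} := by
  refine ⟨hfib, ?_, ?_, ?_⟩
  · exact Set.eq_univ_of_forall fun x => Set.mem_iUnion.2 ⟨f x, rfl⟩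
  · exact fun i j hij => Set.disjoint_singleton.2 hij |>.preimage f
  · intro j x hx y hy
    rcases eq_or_ne x 1 with rfl | hx1
    · exact (Commute.one_left y).eq
    rcases eq_or_ne y 1 with rfl | hy1
    · exact (Commute.one_right x).eq
    exact (hf x y hx1 hy1 (hx.trans hy.symm)).eq

theorem apDegree_eq_of_commute_iff {k : ℕ} (f : G → Fin k)
    (hf : ∀ x y : G, x ≠ 1 → y ≠ 1 → (Commute x y ↔ f x = f y))
    (hfib : ∀ j, 2 ≤ (f ⁻¹' {j}).ncard) : apDegree G = k := by
  have hpart := isAbelianPartition_fibers f (fun x y hx hy => (hf x y hx hy).2) hfib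
  refine IsLeast.csInf_eq ⟨⟨_, hpart⟩, fun n ⟨A, hA⟩ => ?_⟩
  refine hA.le_of_commute_imp_eq f (fun x y hx hy => (hf x y hx hy).1) fun j => ?_
  obtain ⟨x, hx, hx1⟩ := Set.exists_ne_of_one_lt_ncard (hfib j) 1
  exact ⟨x, hx1, hx⟩

end AbelianPartition

/-- Representatives of the maximal abelian subgroups of `A₅`: the Klein four-group fixing each
point, the subgroup of order 3 on each 3-subset, and, for each subgroup of order 5 (which acts
regularly), its unique element sending `0` to `1`. -/
def a5MaxAbelianRep : Fin 21 → Equiv.Perm (Fin 5) :=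
  ![c[1, 2] * c[3, 4], c[0, 2] * c[3, 4], c[0, 1] * c[3, 4], c[0, 1] * c[2, 4], c[0, 1] * c[2, 3],
    c[0, 1, 2], c[0, 1, 3], c[0, 1, 4], c[0, 2, 3], c[0, 2, 4], c[0, 3, 4], c[1, 2, 3], c[1, 2, 4],
    c[1, 3, 4], c[2, 3, 4],
    c[0, 1, 2, 3, 4], c[0, 1, 2, 4, 3], c[0, 1, 3, 2, 4], c[0, 1, 3, 4, 2], c[0, 1, 4, 2, 3],
    c[0, 1, 4, 3, 2]]

def a5Label (x : alternatingGroup (Fin 5)) : Fin 21 :=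
  if h : ∃ i, (x : Equiv.Perm (Fin 5)) * a5MaxAbelianRep i = a5MaxAbelianRep i * x then
    Fin.find _ h
  else 0

set_option maxRecDepth 1000 in
theorem commute_iff_a5Label_eq :
    ∀ x y : alternatingGroup (Fin 5), x ≠ 1 → y ≠ 1 →
      (Commute x y ↔ a5Label x = a5Label y) := by
  simp only [commute_iff_eq]
  decide

theorem two_le_ncard_a5Label_fiber (j : Fin 21) : 2 ≤ (a5Label ⁻¹' {j}).ncard := by
  have h : ∀ i, 2 ≤ (Finset.univ.filter fun x => a5Label x = i).card := by decide
  simpa [← Set.ncard_coe_finset, Set.preimage, Set.mem_singleton_iff] using h j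

theorem apDegree_alternatingGroup_five :
    (∃ (n : ℕ) (A : Fin n → Set (alternatingGroup (Fin 5))), IsAbelianPartition A) ∧
      apDegree (alternatingGroup (Fin 5)) = 21 :=
  ⟨⟨21, _, isAbelianPartition_fibers a5Label
      (fun x y hx hy => (commute_iff_a5Label_eq x y hx hy).2) two_le_ncard_a5Label_fiber⟩,
    apDegree_eq_of_commute_iff a5Label commute_iff_a5Label_eq two_le_ncard_a5Label_fiber⟩
end
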